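/- arXiv:2506.11969 — 3 statements merged into one kernel-verified Lean document; each statement's English description precedes it below -/
import Mathlib

section
/- Let d ≥ 1 and let μ, ν₁, …, ν_N be Borel probability measures on ℝ^d with finite second moments, and let α₁, …, α_N ≥ 0 with Σᵢ αᵢ = 1 and τ > 0. For each i, let γᵢ be a coupling attaining the infimum defining W²_{2,ub}(μ, νᵢ), let γᵢ = μ ⊗ γ_{i,x} be its disintegration over the first coordinate, let Tᵢ(x) = ∫ y dγ_{i,x}(y), and let T̄(x) = Σᵢ αᵢ Tᵢ(x). Then the objective V(ρ) = Σᵢ αᵢ W²_{2,ub}(ρ, νᵢ) satisfies V(T̄_#μ) ≤ V(μ), where T̄_#μ denotes the pushforward of μ under T̄. -/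
open MeasureTheory ENNReal

noncomputable section

/-- Euclidean space ℝ^d. -/
abbrev Ed (d : ℕ) := EuclideanSpace ℝ (Fin d)

/-- The entropy function ψ(t) = t log t − t + 1 (equal to 1 at t = 0 since log 0 = 0). -/
def entropyPsi (t : ℝ) : ℝ := t * Real.log t - t + 1

open Classical in
/-- The Csiszár divergence D_ψ(ρ‖ν) for the entropy function ψ. -/
def Dpsi {d : ℕ} (ρ ν : Measure (Ed d)) : ℝ≥0∞ :=
  if ρ ≪ ν then ∫⁻ y, ENNReal.ofReal (entropyPsi ((ρ.rnDeriv ν) y).toReal) ∂ν else ⊤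

/-- Squared unbalanced Wasserstein cost W²_{2,ub,τ}(μ,ν). -/
def UOTcost {d : ℕ} (τ : ℝ) (μ ν : Measure (Ed d)) : ℝ≥0∞ :=
  ⨅ (π : Measure (Ed d × Ed d)) (_ : π.map Prod.fst = μ),
    (∫⁻ p, ENNReal.ofReal (‖p.1 - p.2‖ ^ 2 / 2) ∂π)
      + ENNReal.ofReal τ * Dpsi (π.map Prod.snd) ν

/-- γ is an optimal coupling for the unbalanced problem W²_{2,ub,τ}(μ,ν). -/
def IsOptimalCoupling {d : ℕ} (τ : ℝ) (μ ν : Measure (Ed d))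
    (γ : Measure (Ed d × Ed d)) : Prop :=
  γ.map Prod.fst = μ ∧
    (∫⁻ p, ENNReal.ofReal (‖p.1 - p.2‖ ^ 2 / 2) ∂γ)
      + ENNReal.ofReal τ * Dpsi (γ.map Prod.snd) ν = UOTcost τ μ ν

/-- The Fréchet objective V(ρ) = Σᵢ αᵢ W²_{2,ub,τ}(ρ, νᵢ). -/
def Vfun {d : ℕ} (τ : ℝ) {N : ℕ} (α : Fin N → ℝ) (ν : Fin N → Measure (Ed d))
    (ρ : Measure (Ed d)) : ℝ≥0∞ :=
  ∑ i, ENNReal.ofReal (α i) * UOTcost τ ρ (ν i)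


/-! Pushing each optimal coupling `γᵢ` forward by `(x, y) ↦ (T̄ x, y)` gives a coupling of
`T̄#μ` with the same second marginal, hence the same divergence term, so only the transport costs
need comparing. Disintegrating over `μ`, for fixed `x` the barycenter `c = T̄ x` of the conditional
means satisfies the Pythagorean identity
`Σᵢ αᵢ ∫ ½‖c - y‖² dγᵢ,ₓ + ½‖c - x‖² = Σᵢ αᵢ ∫ ½‖x - y‖² dγᵢ,ₓ`,
so moving every `x` to `T̄ x` does not increase the weighted cost. When the right side is finite,
every `γᵢ,ₓ` with `αᵢ ≠ 0` has a second moment, and the other indices do not contribute. -/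

section Barycenter

open RealInnerProductSpace

variable {E : Type*} [NormedAddCommGroup E] [MeasurableSpace E]

lemma integrable_norm_sub_sq_of_memLp {κ : Measure E} [IsFiniteMeasure κ]
    (hκ : MemLp (fun y => y) 2 κ) (x : E) :
    Integrable (fun y => ‖x - y‖ ^ 2) κ := by
  simpa using ((memLp_const x).sub hκ).integrable_norm_pow (p := 2) two_ne_zero

lemma memLp_two_of_lintegral_norm_sub_sq_ne_top [OpensMeasurableSpace E]
    [SecondCountableTopology E] {κ : Measure E} [IsFiniteMeasure κ] {x : E}
    (h : ∫⁻ y, ENNReal.ofReal (‖x - y‖ ^ 2 / 2) ∂κ ≠ ⊤) : MemLp (fun y => y) 2 κ := by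
  have hcont : Continuous fun y => x - y := continuous_const.sub continuous_id
  have hhalf : Integrable (fun y => ‖x - y‖ ^ 2 / 2) κ :=
    ⟨(hcont.norm.pow 2 |>.div_const 2).aestronglyMeasurable,
      (hasFiniteIntegral_iff_ofReal (ae_of_all _ fun _ => by positivity)).2 h.lt_top⟩
  have hsub : MemLp (fun y => x - y) 2 κ :=
    (memLp_two_iff_integrable_sq_norm hcont.aestronglyMeasurable).2 <|
      (hhalf.const_mul 2).congr (ae_of_all _ fun _ => mul_div_cancel₀ _ two_ne_zero)
  convert (memLp_const x).sub hsub using 1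
  ext y
  simp

variable [InnerProductSpace ℝ E] [CompleteSpace E]

lemma integral_norm_sub_sq_eq {κ : Measure E} [IsProbabilityMeasure κ]
    (hκ : MemLp (fun y => y) 2 κ) (a x : E) :
    ∫ y, ‖a - y‖ ^ 2 ∂κ
      = ‖a - x‖ ^ 2 - 2 * ⟪a - x, (∫ y, y ∂κ) - x⟫ + ∫ y, ‖x - y‖ ^ 2 ∂κ := by
  have hy : Integrable (fun y => y) κ := hκ.integrable one_le_two
  have hyx : Integrable (fun y => y - x) κ := hy.sub (integrable_const x)
  have hpt : (fun y => ‖a - y‖ ^ 2)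
      = fun y => ‖a - x‖ ^ 2 - 2 * ⟪a - x, y - x⟫ + ‖x - y‖ ^ 2 := by
    ext y
    rw [← norm_sub_rev y x, ← norm_sub_sq_real, sub_sub_sub_cancel_right]
  rw [hpt]
  have hlin : Integrable (fun y => 2 * ⟪a - x, y - x⟫) κ := (hyx.const_inner (a - x)).const_mul 2
  have hconst_sub : Integrable (fun y => ‖a - x‖ ^ 2 - 2 * ⟪a - x, y - x⟫) κ :=
    (integrable_const _).sub hlin
  rw [integral_add hconst_sub (integrable_norm_sub_sq_of_memLp hκ x),
    integral_sub (integrable_const _) hlin,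
    integral_const_mul, integral_inner hyx, integral_sub hy (integrable_const x)]
  simp

lemma sum_integral_norm_sub_sq_barycenter_add {ι : Type*} [Fintype ι] {α : ι → ℝ}
    (hαsum : ∑ i, α i = 1) {κ : ι → Measure E} [∀ i, IsProbabilityMeasure (κ i)]
    (hκ : ∀ i, α i ≠ 0 → MemLp (fun y => y) 2 (κ i)) (x : E) :
    let c := ∑ i, α i • ∫ y, y ∂κ i
    ∑ i, α i * ∫ y, ‖c - y‖ ^ 2 ∂κ i + ‖c - x‖ ^ 2 = ∑ i, α i * ∫ y, ‖x - y‖ ^ 2 ∂κ i := by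
  intro c
  have hterm : ∀ i, α i * ∫ y, ‖c - y‖ ^ 2 ∂κ i = α i * ‖c - x‖ ^ 2
      - 2 * ⟪c - x, α i • ((∫ y, y ∂κ i) - x)⟫ + α i * ∫ y, ‖x - y‖ ^ 2 ∂κ i := by
    intro i
    by_cases hαi : α i = 0
    · simp [hαi]
    · rw [integral_norm_sub_sq_eq (hκ i hαi) c x, real_inner_smul_right]
      ring
  have hmean : ∑ i, α i • ((∫ y, y ∂κ i) - x) = c - x := by
    simp only [smul_sub, Finset.sum_sub_distrib, ← Finset.sum_smul, hαsum, one_smul, c]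
  simp only [hterm, Finset.sum_add_distrib, Finset.sum_sub_distrib, ← Finset.sum_mul,
    ← Finset.mul_sum, ← inner_sum, hmean, hαsum, real_inner_self_eq_norm_sq]
  ring

lemma sum_lintegral_norm_sub_sq_barycenter_le [OpensMeasurableSpace E] [SecondCountableTopology E]
    {ι : Type*} [Fintype ι] {α : ι → ℝ}
    (hα : ∀ i, 0 ≤ α i) (hαsum : ∑ i, α i = 1) (κ : ι → Measure E)
    [∀ i, IsProbabilityMeasure (κ i)] (x : E) :
    ∑ i, ENNReal.ofReal (α i) *
        ∫⁻ y, ENNReal.ofReal (‖(∑ j, α j • ∫ z, z ∂κ j) - y‖ ^ 2 / 2) ∂κ i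
      ≤ ∑ i, ENNReal.ofReal (α i) * ∫⁻ y, ENNReal.ofReal (‖x - y‖ ^ 2 / 2) ∂κ i := by
  by_cases hfin : ∑ i, ENNReal.ofReal (α i) * ∫⁻ y, ENNReal.ofReal (‖x - y‖ ^ 2 / 2) ∂κ i = ⊤
  · exact hfin ▸ le_top
  have hκ : ∀ i, α i ≠ 0 → MemLp (fun y => y) 2 (κ i) := fun i hαi =>
    memLp_two_of_lintegral_norm_sub_sq_ne_top fun htop => hfin <| ENNReal.sum_eq_top.2
      ⟨i, Finset.mem_univ i, ENNReal.mul_eq_top.2 <| Or.inl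
        ⟨ENNReal.ofReal_pos.2 ((hα i).lt_of_ne' hαi) |>.ne', htop⟩⟩
  have hterm : ∀ a i, ENNReal.ofReal (α i) * ∫⁻ y, ENNReal.ofReal (‖a - y‖ ^ 2 / 2) ∂κ i
      = ENNReal.ofReal (α i * ∫ y, ‖a - y‖ ^ 2 / 2 ∂κ i) := by
    intro a i
    by_cases hαi : α i = 0
    · simp [hαi]
    rw [ENNReal.ofReal_mul (hα i), ofReal_integral_eq_lintegral_ofReal
      ((integrable_norm_sub_sq_of_memLp (hκ i hαi) a).div_const 2)
      (ae_of_all _ fun _ => by positivity)]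
  have hnonneg : ∀ a i, 0 ≤ α i * ∫ y, ‖a - y‖ ^ 2 / 2 ∂κ i := fun a i =>
    mul_nonneg (hα i) (integral_nonneg fun _ => by positivity)
  simp only [hterm, ← ENNReal.ofReal_sum_of_nonneg fun i _ => hnonneg _ i]
  refine ENNReal.ofReal_le_ofReal ?_
  have hbary := sum_integral_norm_sub_sq_barycenter_add hαsum hκ x
  simp only [integral_div, mul_div_assoc', ← Finset.sum_div] at hbary ⊢
  nlinarith [sq_nonneg ‖(∑ j, α j • ∫ z, z ∂κ j) - x‖]

end Barycenter

section BarycentricProjection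

variable {E : Type*} [NormedAddCommGroup E] [InnerProductSpace ℝ E] [CompleteSpace E]
  [SecondCountableTopology E] [MeasurableSpace E] [BorelSpace E]

def barycentricProjection (γ : Measure (E × E)) [IsFiniteMeasure γ] (x : E) : E :=
  ∫ y, y ∂γ.condKernel x

@[fun_prop]
lemma measurable_barycentricProjection (γ : Measure (E × E)) [IsFiniteMeasure γ] :
    Measurable (barycentricProjection γ) :=
  (StronglyMeasurable.integral_kernel_prod_right (f := fun _ y => y)
    measurable_snd.stronglyMeasurable).measurable

lemma sum_lintegral_barycentricProjection_cost_le {ι : Type*} [Fintype ι] {α : ι → ℝ}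
    (hα : ∀ i, 0 ≤ α i) (hαsum : ∑ i, α i = 1) {μ : Measure E} (γ : ι → Measure (E × E))
    [∀ i, IsFiniteMeasure (γ i)] (hγ : ∀ i, (γ i).fst = μ) :
    ∑ i, ENNReal.ofReal (α i) * ∫⁻ p, ENNReal.ofReal
        (‖(∑ j, α j • barycentricProjection (γ j) p.1) - p.2‖ ^ 2 / 2) ∂γ i
      ≤ ∑ i, ENNReal.ofReal (α i) * ∫⁻ p, ENNReal.ofReal (‖p.1 - p.2‖ ^ 2 / 2) ∂γ i := by
  have hdisintegrate : ∀ F : E × E → ℝ≥0∞, Measurable F → ∀ i,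
      ENNReal.ofReal (α i) * ∫⁻ p, F p ∂γ i
        = ∫⁻ x, ENNReal.ofReal (α i) * ∫⁻ y, F (x, y) ∂(γ i).condKernel x ∂μ := fun F hF i => by
    rw [← Measure.lintegral_condKernel hF, hγ i, lintegral_const_mul' _ _ ENNReal.ofReal_ne_top]
  have hsum_disintegrate : ∀ F : E × E → ℝ≥0∞, Measurable F →
      ∑ i, ENNReal.ofReal (α i) * ∫⁻ p, F p ∂γ i
        = ∫⁻ x, ∑ i, ENNReal.ofReal (α i) * ∫⁻ y, F (x, y) ∂(γ i).condKernel x ∂μ :=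
    fun F hF => by
      rw [lintegral_finsetSum _ fun i _ => (hF.lintegral_kernel_prod_right').const_mul _]
      exact Finset.sum_congr rfl fun i _ => hdisintegrate F hF i
  rw [hsum_disintegrate _ (by fun_prop), hsum_disintegrate _ (by fun_prop)]
  exact lintegral_mono fun x =>
    sum_lintegral_norm_sub_sq_barycenter_le hα hαsum (fun i => (γ i).condKernel x) x

end BarycentricProjection

lemma UOTcost_map_le {d : ℕ} {τ : ℝ} {μ ν : Measure (Ed d)} {γ : Measure (Ed d × Ed d)}
    (hγ : γ.map Prod.fst = μ) {f : Ed d → Ed d} (hf : Measurable f) :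
    UOTcost τ (μ.map f) ν
      ≤ (∫⁻ p, ENNReal.ofReal (‖f p.1 - p.2‖ ^ 2 / 2) ∂γ)
        + ENNReal.ofReal τ * Dpsi (γ.map Prod.snd) ν := by
  have hg : Measurable (Prod.map f (id : Ed d → Ed d)) := hf.prodMap measurable_id
  have hfst : (γ.map (Prod.map f (id : Ed d → Ed d))).map Prod.fst = μ.map f := by
    rw [Measure.map_map measurable_fst hg, ← hγ, Measure.map_map hf measurable_fst]
    rfl
  have hsnd : (γ.map (Prod.map f (id : Ed d → Ed d))).map Prod.snd = γ.map Prod.snd := by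
    rw [Measure.map_map measurable_snd hg]
    rfl
  calc UOTcost τ (μ.map f) ν
      ≤ (∫⁻ p, ENNReal.ofReal (‖p.1 - p.2‖ ^ 2 / 2) ∂(γ.map (Prod.map f id)))
        + ENNReal.ofReal τ * Dpsi ((γ.map (Prod.map f id)).map Prod.snd) ν :=
          iInf₂_le (γ.map (Prod.map f id)) hfst
    _ = _ := by rw [hsnd, lintegral_map (by fun_prop) hg]; rfl

theorem averageMap_pushforward_decreases_objective_general
    {d N : ℕ} (τ : ℝ)
    (μ : Measure (Ed d))
    (ν : Fin N → Measure (Ed d))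
    (α : Fin N → ℝ) (hα : ∀ i, 0 ≤ α i) (hαsum : ∑ i, α i = 1)
    (γ : Fin N → Measure (Ed d × Ed d)) [∀ i, IsFiniteMeasure (γ i)]
    (hγ : ∀ i, IsOptimalCoupling τ μ (ν i) (γ i))
    (T : Fin N → Ed d → Ed d)
    (hT : ∀ i x, T i x = ∫ y, y ∂((γ i).condKernel x))
    (Tbar : Ed d → Ed d)
    (hTbar : ∀ x, Tbar x = ∑ i, α i • T i x) :
    Vfun τ α ν (μ.map Tbar) ≤ Vfun τ α ν μ := by
  have hTbar_eq : Tbar = fun x => ∑ i, α i • barycentricProjection (γ i) x :=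
    funext fun x => by simp only [hTbar, hT, barycentricProjection]
  subst hTbar_eq
  calc Vfun τ α ν (μ.map _)
      ≤ ∑ i, ENNReal.ofReal (α i) *
          ((∫⁻ p, ENNReal.ofReal
              (‖(∑ j, α j • barycentricProjection (γ j) p.1) - p.2‖ ^ 2 / 2) ∂γ i)
            + ENNReal.ofReal τ * Dpsi ((γ i).map Prod.snd) (ν i)) :=
        Finset.sum_le_sum fun i _ => by
          gcongr
          exact UOTcost_map_le (hγ i).1 (by fun_prop)
    _ ≤ ∑ i, ENNReal.ofReal (α i) *
          ((∫⁻ p, ENNReal.ofReal (‖p.1 - p.2‖ ^ 2 / 2) ∂γ i)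
            + ENNReal.ofReal τ * Dpsi ((γ i).map Prod.snd) (ν i)) := by
        simp only [mul_add, Finset.sum_add_distrib]
        gcongr ?_ + _
        exact sum_lintegral_barycentricProjection_cost_le hα hαsum γ fun i => (hγ i).1
    _ = Vfun τ α ν μ := Finset.sum_congr rfl fun i _ => by rw [(hγ i).2]

theorem averageMap_pushforward_decreases_objective
    {d N : ℕ} (hd : 1 ≤ d) (τ : ℝ) (hτ : 0 < τ)
    (μ : Measure (Ed d)) [IsProbabilityMeasure μ]
    (hμ : Integrable (fun x => ‖x‖ ^ 2) μ)
    (ν : Fin N → Measure (Ed d)) [∀ i, IsProbabilityMeasure (ν i)]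
    (hν : ∀ i, Integrable (fun x => ‖x‖ ^ 2) (ν i))
    (α : Fin N → ℝ) (hα : ∀ i, 0 ≤ α i) (hαsum : ∑ i, α i = 1)
    (γ : Fin N → Measure (Ed d × Ed d)) [∀ i, IsFiniteMeasure (γ i)]
    (hγ : ∀ i, IsOptimalCoupling τ μ (ν i) (γ i))
    (T : Fin N → Ed d → Ed d)
    (hT : ∀ i x, T i x = ∫ y, y ∂((γ i).condKernel x))
    (Tbar : Ed d → Ed d)
    (hTbar : ∀ x, Tbar x = ∑ i, α i • T i x) :
    Vfun τ α ν (μ.map Tbar) ≤ Vfun τ α ν μ :=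
  averageMap_pushforward_decreases_objective_general τ μ ν α hα hαsum γ hγ T hT Tbar hTbar

end
end

section
/- Let d ≥ 1, let μ be a Borel probability measure on ℝ^d with finite second moment, and for i = 1, …, N let γᵢ be Borel probability measures on ℝ^d × ℝ^d whose first marginal is μ, each with finite second moment, with disintegrations γᵢ = μ ⊗ γ_{i,x}, conditional means Tᵢ(x) = ∫ y dγ_{i,x}(y), weights αᵢ ≥ 0 summing to 1, and T̄(x) = Σᵢ αᵢ Tᵢ(x). Then Σᵢ αᵢ ∫ ‖x − y‖² dγᵢ(x,y) = ∫ ‖x − T̄(x)‖² dμ(x) + Σᵢ αᵢ ∫ ‖T̄(x) − y‖² dγᵢ(x,y). In particular Σᵢ αᵢ ∫ ‖x − y‖² dγᵢ(x,y) ≥ Σᵢ αᵢ ∫ ‖T̄(x) − y‖² dγᵢ(x,y). -/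
open MeasureTheory ENNReal

noncomputable section

/-!
Expand the cost around `T̄(x)`:
`‖x - y‖² = ‖x - T̄ x‖² + 2 ⟪x - T̄ x, T̄ x - y⟫ + ‖T̄ x - y‖²`.
Integrating against `γᵢ = μ ⊗ γᵢₓ`, the inner integral in `y` turns the cross term into
`∫ ⟪x - T̄ x, T̄ x - Tᵢ x⟫ dμ`, because the cross term is affine in `y`. These cross terms have
vanishing `α`-average since `∑ αᵢ (T̄ - Tᵢ) = 0`, and the first term does not depend on `i`.
Finiteness of second moments makes every term integrable, the conditional means being in `L²`
by Jensen's inequality.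
-/

open scoped RealInnerProductSpace

section InnerProduct

variable {α E : Type*} [MeasurableSpace α] [NormedAddCommGroup E] [InnerProductSpace ℝ E]
  {μ : Measure α}

lemma MeasureTheory.MemLp.integrable_inner {f g : α → E} (hf : MemLp f 2 μ) (hg : MemLp g 2 μ) :
    Integrable (fun x => ⟪f x, g x⟫) μ := by
  refine (L2.integrable_inner (𝕜 := ℝ) (hf.toLp f) (hg.toLp g)).congr ?_
  filter_upwards [hf.coeFn_toLp, hg.coeFn_toLp] with x hfx hgx
  rw [hfx, hgx]

lemma sum_mul_integral_inner_sub_eq_zero {ι : Type*} [Fintype ι] {w : ι → ℝ}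
    (hw : ∑ i, w i = 1) {g : α → E} {T : ι → α → E} (hg : MemLp g 2 μ)
    (hT : ∀ i, MemLp (T i) 2 μ) :
    ∑ i, w i * ∫ x, ⟪g x, ∑ j, w j • T j x - T i x⟫ ∂μ = 0 := by
  have hS : MemLp (fun x => ∑ j, w j • T j x) 2 μ :=
    memLp_finsetSum _ fun j _ => (hT j).const_smul (w j)
  have hint : ∀ i, Integrable (fun x => w i * ⟪g x, ∑ j, w j • T j x - T i x⟫) μ :=
    fun i => (hg.integrable_inner (hS.sub (hT i))).const_mul _
  have hpt : ∀ x, ∑ i, w i * ⟪g x, ∑ j, w j • T j x - T i x⟫ = 0 := fun x => by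
    simp_rw [← real_inner_smul_right, ← inner_sum, smul_sub, Finset.sum_sub_distrib,
      ← Finset.sum_smul, hw, one_smul, sub_self, inner_zero_right]
  simp_rw [← integral_const_mul]
  rw [← integral_finsetSum _ fun i _ => hint i]
  simp_rw [hpt, integral_zero]

lemma norm_integral_sq_le_integral_norm_sq [CompleteSpace E] [IsProbabilityMeasure μ]
    {f : α → E} (hf : MemLp f 2 μ) : ‖∫ x, f x ∂μ‖ ^ 2 ≤ ∫ x, ‖f x‖ ^ 2 ∂μ :=
  ((convexOn_norm convex_univ).pow (fun _ _ => norm_nonneg _) 2).map_integral_le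
    (continuous_norm.pow 2).continuousOn isClosed_univ (by simp) (hf.integrable one_le_two)
    hf.norm.integrable_sq

end InnerProduct

section Disintegration

variable {α E : Type*} [MeasurableSpace α] [NormedAddCommGroup E] [InnerProductSpace ℝ E]
  [CompleteSpace E] [SecondCountableTopology E] [MeasurableSpace E] [BorelSpace E]

def barycentricProj (ρ : Measure (α × E)) [IsFiniteMeasure ρ] (x : α) : E :=
  ∫ y, y ∂ρ.condKernel x

variable {ρ : Measure (α × E)} [IsFiniteMeasure ρ]

lemma memLp_barycentricProj (hy : MemLp (fun p => p.2) 2 ρ) :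
    MemLp (barycentricProj ρ) 2 ρ.fst := by
  have hy2 : Integrable (fun p => ‖p.2‖ ^ 2) ρ := hy.norm.integrable_sq
  have hmeas : AEStronglyMeasurable (barycentricProj ρ) ρ.fst :=
    (hy.integrable one_le_two).1.integral_condKernel
  rw [memLp_two_iff_integrable_sq_norm hmeas]
  refine hy2.integral_condKernel.mono' (hmeas.norm.pow 2) ?_
  filter_upwards [hy2.condKernel_ae] with x hx
  rw [Real.norm_of_nonneg (by positivity)]
  exact norm_integral_sq_le_integral_norm_sq
    ((memLp_two_iff_integrable_sq_norm aestronglyMeasurable_id).2 hx)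

lemma integral_inner_sub_snd_eq_integral_inner_sub_barycentricProj {g h : α → E}
    (hg : MemLp g 2 ρ.fst) (hh : MemLp h 2 ρ.fst) (hy : MemLp (fun p => p.2) 2 ρ) :
    ∫ p, ⟪g p.1, h p.1 - p.2⟫ ∂ρ = ∫ x, ⟪g x, h x - barycentricProj ρ x⟫ ∂ρ.fst := by
  have hfst : MeasurePreserving Prod.fst ρ ρ.fst := ⟨measurable_fst, rfl⟩
  have hint : Integrable (fun p => ⟪g p.1, h p.1 - p.2⟫) ρ :=
    (hg.comp_measurePreserving hfst).integrable_inner ((hh.comp_measurePreserving hfst).sub hy)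
  rw [← Measure.integral_condKernel hint]
  refine integral_congr_ae ?_
  filter_upwards [(hy.integrable one_le_two).condKernel_ae] with x hx
  have hsub : Integrable (fun y => h x - y) (ρ.condKernel x) := (integrable_const _).sub hx
  rw [integral_inner hsub, integral_sub (integrable_const _) hx, integral_const, probReal_univ,
    one_smul, barycentricProj]

theorem integral_norm_fst_sub_snd_sq_eq {ρ : Measure (E × E)} [IsFiniteMeasure ρ] {S : E → E}
    (hx : MemLp (fun x => x) 2 ρ.fst) (hy : MemLp (fun p => p.2) 2 ρ) (hS : MemLp S 2 ρ.fst) :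
    ∫ p, ‖p.1 - p.2‖ ^ 2 ∂ρ = ∫ x, ‖x - S x‖ ^ 2 ∂ρ.fst
      + 2 * ∫ x, ⟪x - S x, S x - barycentricProj ρ x⟫ ∂ρ.fst + ∫ p, ‖S p.1 - p.2‖ ^ 2 ∂ρ := by
  have hfst : MeasurePreserving Prod.fst ρ ρ.fst := ⟨measurable_fst, rfl⟩
  have hg : MemLp (fun x => x - S x) 2 ρ.fst := hx.sub hS
  have hg' : MemLp (fun p : E × E => p.1 - S p.1) 2 ρ := hg.comp_measurePreserving hfst
  have hv : MemLp (fun p : E × E => S p.1 - p.2) 2 ρ := (hS.comp_measurePreserving hfst).sub hy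
  have hpt : ∀ p : E × E, ‖p.1 - p.2‖ ^ 2
      = ‖p.1 - S p.1‖ ^ 2 + 2 * ⟪p.1 - S p.1, S p.1 - p.2⟫ + ‖S p.1 - p.2‖ ^ 2 := fun p => by
    rw [← norm_add_sq_real, sub_add_sub_cancel]
  have hmarg : ∫ p, ‖p.1 - S p.1‖ ^ 2 ∂ρ = ∫ x, ‖x - S x‖ ^ 2 ∂ρ.fst :=
    (integral_map measurable_fst.aemeasurable (hg.1.norm.pow 2)).symm
  have hA : Integrable (fun p : E × E => ‖p.1 - S p.1‖ ^ 2) ρ := hg'.norm.integrable_sq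
  have hB : Integrable (fun p : E × E => 2 * ⟪p.1 - S p.1, S p.1 - p.2⟫) ρ :=
    (hg'.integrable_inner hv).const_mul 2
  have hAB : Integrable (fun p : E × E =>
      ‖p.1 - S p.1‖ ^ 2 + 2 * ⟪p.1 - S p.1, S p.1 - p.2⟫) ρ := hA.add hB
  simp_rw [hpt]
  rw [integral_add hAB hv.norm.integrable_sq, integral_add hA hB, integral_const_mul, hmarg,
    integral_inner_sub_snd_eq_integral_inner_sub_barycentricProj hg hS hy]

end Disintegration

theorem averageMap_transport_cost_identity_general
    {d N : ℕ}
    (μ : Measure (Ed d))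
    (hμ : Integrable (fun x => ‖x‖ ^ 2) μ)
    (γ : Fin N → Measure (Ed d × Ed d)) [∀ i, IsProbabilityMeasure (γ i)]
    (hfst : ∀ i, (γ i).map Prod.fst = μ)
    (hmom : ∀ i, Integrable (fun p : Ed d × Ed d => ‖p.1‖ ^ 2 + ‖p.2‖ ^ 2) (γ i))
    (α : Fin N → ℝ) (hαsum : ∑ i, α i = 1)
    (T : Fin N → Ed d → Ed d)
    (hT : ∀ i x, T i x = ∫ y, y ∂((γ i).condKernel x))
    (Tbar : Ed d → Ed d)
    (hTbar : ∀ x, Tbar x = ∑ i, α i • T i x) :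
    (∑ i, α i * ∫ p, ‖p.1 - p.2‖ ^ 2 ∂(γ i))
        = (∫ x, ‖x - Tbar x‖ ^ 2 ∂μ)
          + ∑ i, α i * ∫ p, ‖Tbar p.1 - p.2‖ ^ 2 ∂(γ i) ∧
      (∑ i, α i * ∫ p, ‖Tbar p.1 - p.2‖ ^ 2 ∂(γ i))
        ≤ ∑ i, α i * ∫ p, ‖p.1 - p.2‖ ^ 2 ∂(γ i) := by
  have hγ_fst : ∀ i, (γ i).fst = μ := hfst
  have hT_eq : ∀ i, barycentricProj (γ i) = T i := fun i => funext fun x => (hT i x).symm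
  have hx : MemLp (fun x => x) 2 μ :=
    (memLp_two_iff_integrable_sq_norm aestronglyMeasurable_id).2 hμ
  have hy : ∀ i, MemLp (fun p => p.2) 2 (γ i) := fun i =>
    (memLp_two_iff_integrable_sq_norm measurable_snd.aestronglyMeasurable).2 <|
      (hmom i).mono' (by fun_prop) (.of_forall fun p => by
        rw [Real.norm_of_nonneg (by positivity)]; nlinarith [sq_nonneg ‖p.1‖])
  have hT_memLp : ∀ i, MemLp (T i) 2 μ := fun i =>
    hT_eq i ▸ hγ_fst i ▸ memLp_barycentricProj (hy i)
  have hTbar_memLp : MemLp Tbar 2 μ :=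
    funext hTbar ▸ memLp_finsetSum _ fun i _ => (hT_memLp i).const_smul (α i)
  have hdecomp := fun i =>
    integral_norm_fst_sub_snd_sq_eq (hγ_fst i ▸ hx) (hy i) (hγ_fst i ▸ hTbar_memLp)
  have hcross : ∑ i, α i * ∫ x, ⟪x - Tbar x, Tbar x - T i x⟫ ∂μ = 0 := by
    simpa only [Pi.sub_apply, ← hTbar] using
      sum_mul_integral_inner_sub_eq_zero hαsum (hx.sub hTbar_memLp) hT_memLp
  have identity : ∑ i, α i * ∫ p, ‖p.1 - p.2‖ ^ 2 ∂(γ i)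
      = ∫ x, ‖x - Tbar x‖ ^ 2 ∂μ + ∑ i, α i * ∫ p, ‖Tbar p.1 - p.2‖ ^ 2 ∂(γ i) := by
    simp_rw [hdecomp, hγ_fst, hT_eq, mul_add, Finset.sum_add_distrib, ← Finset.sum_mul, hαsum,
      one_mul, mul_left_comm _ (2 : ℝ), ← Finset.mul_sum, hcross, mul_zero, add_zero]
  exact ⟨identity, identity ▸ le_add_of_nonneg_left (integral_nonneg fun _ => by positivity)⟩

theorem averageMap_transport_cost_identity
    {d N : ℕ} (hd : 1 ≤ d)
    (μ : Measure (Ed d)) [IsProbabilityMeasure μ]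
    (hμ : Integrable (fun x => ‖x‖ ^ 2) μ)
    (γ : Fin N → Measure (Ed d × Ed d)) [∀ i, IsProbabilityMeasure (γ i)]
    (hfst : ∀ i, (γ i).map Prod.fst = μ)
    (hmom : ∀ i, Integrable (fun p : Ed d × Ed d => ‖p.1‖ ^ 2 + ‖p.2‖ ^ 2) (γ i))
    (α : Fin N → ℝ) (hα : ∀ i, 0 ≤ α i) (hαsum : ∑ i, α i = 1)
    (T : Fin N → Ed d → Ed d)
    (hT : ∀ i x, T i x = ∫ y, y ∂((γ i).condKernel x))
    (Tbar : Ed d → Ed d)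
    (hTbar : ∀ x, Tbar x = ∑ i, α i • T i x) :
    (∑ i, α i * ∫ p, ‖p.1 - p.2‖ ^ 2 ∂(γ i))
        = (∫ x, ‖x - Tbar x‖ ^ 2 ∂μ)
          + ∑ i, α i * ∫ p, ‖Tbar p.1 - p.2‖ ^ 2 ∂(γ i) ∧
      (∑ i, α i * ∫ p, ‖Tbar p.1 - p.2‖ ^ 2 ∂(γ i))
        ≤ ∑ i, α i * ∫ p, ‖p.1 - p.2‖ ^ 2 ∂(γ i) :=
  averageMap_transport_cost_identity_general μ hμ γ hfst hmom α hαsum T hT Tbar hTbar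

end
end

section
/- Let d ≥ 1, let μ, ν be Borel probability measures on ℝ^d with finite second moments, and let τ > 0. Let v : ℝ^d → ℝ be bounded and Borel measurable, and define its c-transform v^c(x) = inf over y ∈ ℝ^d of [½‖x − y‖² − v(y)], and ψ*_τ(s) = τ·(e^{s/τ} − 1). Then ∫ v^c(x) dμ(x) − ∫ ψ*_τ(−v(y)) dν(y) ≤ W²_{2,ub}(μ, ν) (weak duality for the semi-dual formulation of unbalanced optimal transport). -/
open MeasureTheory ENNReal

noncomputable section

/-! Fix a coupling `π` with first marginal `μ` and second marginal `ρ ≪ ν` of density `f`.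
Two pointwise inequalities are integrated: the c-transform gives `v^c x + v y ≤ ‖x - y‖² / 2`,
integrated against `π`; Fenchel–Young for `ψ` gives `-v f ≤ τ ψ(f) + τ (exp (-v / τ) - 1)`,
integrated against `ν`, where `∫ v f dν = ∫ v dρ`. Adding them bounds the dual objective by the
cost of `π`; couplings of infinite cost, or with `ρ` not absolutely continuous, are trivial. -/

lemma mul_le_entropyPsi_add_exp_sub_one (u : ℝ) {t : ℝ} (ht : 0 ≤ t) :
    u * t ≤ entropyPsi t + (Real.exp u - 1) := by
  rcases ht.eq_or_lt with rfl | ht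
  · simp [entropyPsi, (Real.exp_pos u).le]
  · -- `exp (u - log t) ≥ u - log t + 1`, multiplied by `t`
    have key := mul_le_mul_of_nonneg_left (Real.add_one_le_exp (u - Real.log t)) ht.le
    rw [Real.exp_sub, Real.exp_log ht, mul_div_cancel₀ _ ht.ne'] at key
    unfold entropyPsi
    nlinarith

lemma measurable_entropyPsi : Measurable entropyPsi := by
  unfold entropyPsi
  fun_prop

lemma entropyPsi_nonneg {t : ℝ} (ht : 0 ≤ t) : 0 ≤ entropyPsi t := by
  simpa using mul_le_entropyPsi_add_exp_sub_one 0 ht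

lemma mul_le_mul_entropyPsi_add_mul_exp_sub_one {τ : ℝ} (hτ : 0 < τ) (s : ℝ) {t : ℝ} (ht : 0 ≤ t) :
    s * t ≤ τ * entropyPsi t + τ * (Real.exp (s / τ) - 1) := by
  have h := mul_le_mul_of_nonneg_left (mul_le_entropyPsi_add_exp_sub_one (s / τ) ht) hτ.le
  rwa [← mul_assoc, mul_div_cancel₀ _ hτ.ne', mul_add] at h

section CTransform

variable {X Y : Type*}

def cTransform (c : X → Y → ℝ) (v : Y → ℝ) (x : X) : ℝ := ⨅ y, c x y - v y

variable {c : X → Y → ℝ} {v : Y → ℝ} {C : ℝ}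

lemma bddBelow_range_cost_sub (hc : ∀ x y, 0 ≤ c x y) (hv : ∀ y, v y ≤ C) (x : X) :
    BddBelow (Set.range fun y => c x y - v y) :=
  ⟨-C, by rintro _ ⟨y, rfl⟩; linarith [hc x y, hv y]⟩

lemma cTransform_le (hc : ∀ x y, 0 ≤ c x y) (hv : ∀ y, v y ≤ C) (x : X) (y : Y) :
    cTransform c v x ≤ c x y - v y :=
  ciInf_le (bddBelow_range_cost_sub hc hv x) y

lemma neg_le_cTransform [Nonempty Y] (hc : ∀ x y, 0 ≤ c x y) (hv : ∀ y, v y ≤ C) (x : X) :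
    -C ≤ cTransform c v x :=
  le_ciInf fun y => by linarith [hc x y, hv y]

lemma upperSemicontinuous_cTransform [TopologicalSpace X] (hc : ∀ x y, 0 ≤ c x y)
    (hv : ∀ y, v y ≤ C) (hcont : ∀ y, Continuous (c · y)) :
    UpperSemicontinuous (cTransform c v) :=
  upperSemicontinuous_ciInf (bddBelow_range_cost_sub hc hv)
    fun y => ((hcont y).sub continuous_const).upperSemicontinuous

end CTransform

section Integrals

variable {α : Type*} [MeasurableSpace α]

lemma integrable_and_lintegral_eq_ofReal_integral {μ : Measure α} {f : α → ℝ}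
    (hfm : AEStronglyMeasurable f μ) (hf : ∀ x, 0 ≤ f x)
    (hfin : ∫⁻ x, ENNReal.ofReal (f x) ∂μ ≠ ⊤) :
    Integrable f μ ∧ ∫⁻ x, ENNReal.ofReal (f x) ∂μ = ENNReal.ofReal (∫ x, f x ∂μ) := by
  have hint := (lintegral_ofReal_ne_top_iff_integrable hfm (.of_forall hf)).mp hfin
  exact ⟨hint, (ofReal_integral_eq_lintegral_ofReal hint (.of_forall hf)).symm⟩

lemma integral_add_integral_le_of_le_cost {X Y : Type*} [MeasurableSpace X] [MeasurableSpace Y]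
    {π : Measure (X × Y)} {f : X → ℝ} {g : Y → ℝ} {c : X × Y → ℝ}
    (hf : Integrable f (π.map Prod.fst)) (hg : Integrable g (π.map Prod.snd))
    (hc : Integrable c π) (h : ∀ x y, f x + g y ≤ c (x, y)) :
    ∫ x, f x ∂(π.map Prod.fst) + ∫ y, g y ∂(π.map Prod.snd) ≤ ∫ p, c p ∂π := by
  have hf' : Integrable (fun p : X × Y => f p.1) π := hf.comp_measurable measurable_fst
  have hg' : Integrable (fun p : X × Y => g p.2) π := hg.comp_measurable measurable_snd
  rw [integral_map measurable_fst.aemeasurable hf.aestronglyMeasurable,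
    integral_map measurable_snd.aemeasurable hg.aestronglyMeasurable, ← integral_add hf' hg']
  exact integral_mono (hf'.add hg') hc fun p => h p.1 p.2

lemma integral_le_mul_integral_entropyPsi_add {ρ ν : Measure α} [SigmaFinite ρ]
    [IsFiniteMeasure ν] (hac : ρ ≪ ν) {τ : ℝ} (hτ : 0 < τ) {s : α → ℝ} (hs : Integrable s ρ)
    (hexp : Integrable (fun y => Real.exp (s y / τ)) ν)
    (hψ : Integrable (fun y => entropyPsi (ρ.rnDeriv ν y).toReal) ν) :
    ∫ y, s y ∂ρ ≤ τ * ∫ y, entropyPsi (ρ.rnDeriv ν y).toReal ∂ν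
      + ∫ y, τ * (Real.exp (s y / τ) - 1) ∂ν := by
  have hconj : Integrable (fun y => τ * (Real.exp (s y / τ) - 1)) ν :=
    (hexp.sub (integrable_const 1)).const_mul τ
  rw [← integral_toReal_rnDeriv_mul hac, ← integral_const_mul, ← integral_add
    (hψ.const_mul τ) hconj]
  refine integral_mono ((integrable_toReal_rnDeriv_mul_iff hac).mpr hs)
    ((hψ.const_mul τ).add hconj) fun y => ?_
  rw [mul_comm]
  exact mul_le_mul_entropyPsi_add_mul_exp_sub_one hτ _ ENNReal.toReal_nonneg

end Integrals

lemma integral_cTransform_sub_le {E : Type*} [SeminormedAddCommGroup E] [MeasurableSpace E]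
    [OpensMeasurableSpace E] {π : Measure (E × E)} [IsFiniteMeasure π] {ν : Measure E}
    [IsFiniteMeasure ν] (hac : π.map Prod.snd ≪ ν) {τ : ℝ} (hτ : 0 < τ) {v : E → ℝ} {C : ℝ}
    (hvm : Measurable v) (hv : ∀ y, |v y| ≤ C)
    (hcost : Integrable (fun p : E × E => ‖p.1 - p.2‖ ^ 2 / 2) π)
    (hψ : Integrable (fun y => entropyPsi ((π.map Prod.snd).rnDeriv ν y).toReal) ν) :
    ∫ x, cTransform (fun x y => ‖x - y‖ ^ 2 / 2) v x ∂(π.map Prod.fst)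
        - ∫ y, τ * (Real.exp (-v y / τ) - 1) ∂ν
      ≤ ∫ p, ‖p.1 - p.2‖ ^ 2 / 2 ∂π
        + τ * ∫ y, entropyPsi ((π.map Prod.snd).rnDeriv ν y).toReal ∂ν := by
  have hc : ∀ x y : E, 0 ≤ ‖x - y‖ ^ 2 / 2 := fun _ _ => by positivity
  have hv_le : ∀ y, v y ≤ C := fun y => (abs_le.mp (hv y)).2
  have hv_int : Integrable v (π.map Prod.snd) :=
    .of_bound hvm.aestronglyMeasurable C (.of_forall hv)
  have hvc_int : Integrable (cTransform (fun x y => ‖x - y‖ ^ 2 / 2) v) (π.map Prod.fst) := by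
    have husc := upperSemicontinuous_cTransform hc hv_le fun y => by fun_prop
    refine .of_bound husc.measurable.aestronglyMeasurable C (.of_forall fun x => ?_)
    have hle := cTransform_le hc hv_le x x
    rw [sub_self, norm_zero] at hle
    rw [Real.norm_eq_abs, abs_le]
    constructor
    · exact neg_le_cTransform hc hv_le x
    · linarith [(abs_le.mp (hv x)).1]
  have hexp : Integrable (fun y => Real.exp (-v y / τ)) ν := by
    refine .of_bound (by fun_prop) (Real.exp (C / τ)) (.of_forall fun y => ?_)
    rw [Real.norm_of_nonneg (Real.exp_pos _).le, Real.exp_le_exp]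
    exact div_le_div_of_nonneg_right (neg_le.mp (abs_le.mp (hv y)).1) hτ.le
  have htransport := integral_add_integral_le_of_le_cost hvc_int hv_int hcost
    fun x y => le_sub_iff_add_le.mp (cTransform_le hc hv_le x y)
  have hyoung := integral_le_mul_integral_entropyPsi_add (s := fun y => -v y) hac hτ hv_int.neg
    hexp hψ
  rw [integral_neg] at hyoung
  linarith

theorem UOT_semidual_weak_duality_general
    {d : ℕ}
    (μ ν : Measure (Ed d)) [IsProbabilityMeasure μ] [IsProbabilityMeasure ν]
    (τ : ℝ) (hτ : 0 < τ)
    (v : Ed d → ℝ) (hvb : ∃ C : ℝ, ∀ y, |v y| ≤ C) (hvm : Measurable v)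
    (vc : Ed d → ℝ)
    (hvc : ∀ x, vc x = ⨅ y : Ed d, (‖x - y‖ ^ 2 / 2 - v y)) :
    ENNReal.ofReal ((∫ x, vc x ∂μ) - ∫ y, τ * (Real.exp (-v y / τ) - 1) ∂ν)
      ≤ UOTcost τ μ ν := by
  obtain ⟨C, hC⟩ := hvb
  obtain rfl : vc = cTransform (fun x y => ‖x - y‖ ^ 2 / 2) v := funext hvc
  refine le_iInf₂ fun π hπ => ?_
  subst hπ
  have : IsFiniteMeasure π := Measure.isFiniteMeasure_of_map measurable_fst.aemeasurable
  have hτ' : ENNReal.ofReal τ ≠ 0 := (ENNReal.ofReal_pos.mpr hτ).ne'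
  by_cases hac : π.map Prod.snd ≪ ν
  swap
  · simp [Dpsi, hac, ENNReal.mul_top hτ']
  rw [Dpsi, if_pos hac]
  by_cases hL : ∫⁻ p, ENNReal.ofReal (‖p.1 - p.2‖ ^ 2 / 2) ∂π = ⊤
  · simp [hL]
  by_cases hD : ∫⁻ y, ENNReal.ofReal (entropyPsi ((π.map Prod.snd).rnDeriv ν y).toReal) ∂ν = ⊤
  · simp [hD, ENNReal.mul_top hτ']
  obtain ⟨hcost, hL_eq⟩ := integrable_and_lintegral_eq_ofReal_integral
    (by fun_prop) (fun p => by positivity) hL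
  obtain ⟨hψ, hD_eq⟩ := integrable_and_lintegral_eq_ofReal_integral
    (f := fun y => entropyPsi ((π.map Prod.snd).rnDeriv ν y).toReal)
    (measurable_entropyPsi.comp
      (Measure.measurable_rnDeriv _ _).ennreal_toReal).aestronglyMeasurable
    (fun y => entropyPsi_nonneg ENNReal.toReal_nonneg) hD
  rw [hL_eq, hD_eq, ← ENNReal.ofReal_mul hτ.le,
    ← ENNReal.ofReal_add (integral_nonneg fun p => by positivity)
      (mul_nonneg hτ.le (integral_nonneg fun y => entropyPsi_nonneg ENNReal.toReal_nonneg))]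
  exact ENNReal.ofReal_le_ofReal (integral_cTransform_sub_le hac hτ hvm hC hcost hψ)

theorem UOT_semidual_weak_duality
    {d : ℕ} (hd : 1 ≤ d)
    (μ ν : Measure (Ed d)) [IsProbabilityMeasure μ] [IsProbabilityMeasure ν]
    (hμ : Integrable (fun x => ‖x‖ ^ 2) μ)
    (hν : Integrable (fun x => ‖x‖ ^ 2) ν)
    (τ : ℝ) (hτ : 0 < τ)
    (v : Ed d → ℝ) (hvb : ∃ C : ℝ, ∀ y, |v y| ≤ C) (hvm : Measurable v)
    (vc : Ed d → ℝ)
    (hvc : ∀ x, vc x = ⨅ y : Ed d, (‖x - y‖ ^ 2 / 2 - v y)) :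
    ENNReal.ofReal ((∫ x, vc x ∂μ) - ∫ y, τ * (Real.exp (-v y / τ) - 1) ∂ν)
      ≤ UOTcost τ μ ν :=
  UOT_semidual_weak_duality_general μ ν τ hτ v hvb hvm vc hvc

end
end
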